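/- arXiv:2012.07552 — 2 statements merged into one kernel-verified Lean document; each statement's English description precedes it below -/
import Mathlib

section
/- (Corollary 1, estimate; case f = 0.) Set h̃_τ := [‖u(0)‖ + ∫_0^τ α(ξ)·ν(ξ)·‖u(ξ−τ)‖^p dξ]/ν(τ) and assume h̃_τ > 0. Assume the improper integral I := ∫_τ^∞ α(ξ)·σ(ξ)^p·ν(ξ)^{1−p} dξ converges and (h̃_τ·ν(τ))^{1−p} > (p−1)·I. Then for all t ≥ τ, ‖u(t)‖ ≤ (1/ν(t))·( (h̃_τ·ν(τ))^{1−p} − (p−1)·∫_τ^t α(ξ)·σ(ξ)^p·ν(ξ)^{1−p} dξ )^{−1/(p−1)}. -/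
/-!
Write `n = ‖u‖`. Differentiating `n ^ 2 = Re ⟪u, u⟫` turns the hypothesis on `Re ⟪u, u̇⟫` into
`n' ≤ γ n + α n(t - τ) ^ p`; wherever the delayed comparison `n(t - τ) ≤ h(t - τ)` is already
known, `ν (n - h)` is therefore nonincreasing, and the method of steps over intervals of length
`τ` gives `‖u‖ ≤ h`. For `w = ν h` the equation reads `w' = α ν h(t - τ) ^ p ≥ 0`, so `w` is
nondecreasing and, since `ν(t) = ν(t - τ) σ(t)`, `w' ≤ α σ ^ p ν ^ (1 - p) w ^ p` for `t ≥ τ`.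
Bihari's inequality integrates this from `τ`, where `w(τ) = h̃_τ ν(τ)` by the fundamental
theorem of calculus.
-/

open Real MeasureTheory Set Filter Topology ComplexInnerProductSpace
open scoped InnerProductSpace

noncomputable def nu (γ : ℝ → ℝ) (t : ℝ) : ℝ := Real.exp (-∫ ξ in (0:ℝ)..t, γ ξ)

noncomputable def sig (γ : ℝ → ℝ) (τ t : ℝ) : ℝ :=
  Real.exp (-∫ ξ in (t - τ)..t, γ ξ)

lemma nu_pos (γ : ℝ → ℝ) (t : ℝ) : 0 < nu γ t := Real.exp_pos _

lemma sig_pos (γ : ℝ → ℝ) (τ t : ℝ) : 0 < sig γ τ t := Real.exp_pos _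

lemma nu_zero (γ : ℝ → ℝ) : nu γ 0 = 1 := by simp [nu]

lemma hasDerivAt_nu {γ : ℝ → ℝ} (hγ : Continuous γ) (t : ℝ) :
    HasDerivAt (nu γ) (-γ t * nu γ t) t := by
  have hG : HasDerivAt (fun s => ∫ ξ in (0:ℝ)..s, γ ξ) (γ t) t :=
    intervalIntegral.integral_hasDerivAt_right (hγ.intervalIntegrable _ _)
      hγ.aestronglyMeasurable.stronglyMeasurableAtFilter hγ.continuousAt
  exact hG.neg.exp.congr_deriv (by rw [nu, Pi.neg_apply]; ring)

lemma continuous_nu {γ : ℝ → ℝ} (hγ : Continuous γ) : Continuous (nu γ) :=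
  continuous_iff_continuousAt.2 fun t => (hasDerivAt_nu hγ t).continuousAt

lemma nu_mul_sig {γ : ℝ → ℝ} (hγ : Continuous γ) (τ t : ℝ) :
    nu γ (t - τ) * sig γ τ t = nu γ t := by
  rw [nu, sig, ← Real.exp_add, nu, ← intervalIntegral.integral_add_adjacent_intervals
    (hγ.intervalIntegrable 0 (t - τ)) (hγ.intervalIntegrable (t - τ) t)]
  exact congrArg rexp (neg_add _ _).symm

lemma continuous_sig {γ : ℝ → ℝ} (hγ : Continuous γ) (τ : ℝ) : Continuous (sig γ τ) := by
  have : sig γ τ = fun t => nu γ t / nu γ (t - τ) := by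
    funext t
    rw [eq_div_iff (nu_pos γ (t - τ)).ne', mul_comm, nu_mul_sig hγ]
  rw [this]
  exact (continuous_nu hγ).div ((continuous_nu hγ).comp (continuous_sub_right τ))
    fun t => (nu_pos γ _).ne'

theorem HasDerivWithinAt.norm_mul_eq_re_inner {𝕜 E : Type*} [RCLike 𝕜] [NormedAddCommGroup E]
    [InnerProductSpace 𝕜 E] [NormedSpace ℝ E] {u : ℝ → E} {u' : E} {g : ℝ} {s : Set ℝ} {t : ℝ}
    (hs : UniqueDiffWithinAt ℝ s t) (hu : HasDerivWithinAt u u' s t)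
    (hn : HasDerivWithinAt (fun r => ‖u r‖) g s t) :
    ‖u t‖ * g = RCLike.re ⟪u t, u'⟫_𝕜 := by
  have hsq := (RCLike.reCLM (K := 𝕜)).hasFDerivAt.comp_hasDerivWithinAt t (hu.inner 𝕜 hu)
  simp only [Function.comp_def, RCLike.reCLM_apply, inner_self_eq_norm_sq, map_add] at hsq
  have := hs.eq_deriv _ (hn.pow 2) hsq
  rw [inner_re_symm u'] at this
  push_cast at this
  linarith

/-- At a zero of a nonnegative function the derivative vanishes, so there the factor `n x` may
be cancelled as well. -/
theorem HasDerivAt.le_of_mul_le_mul_left_of_nonneg {n : ℝ → ℝ} {g c x : ℝ}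
    (hd : HasDerivAt n g x) (hn : ∀ y, 0 ≤ n y) (hc : n x = 0 → 0 ≤ c)
    (h : n x * g ≤ n x * c) : g ≤ c := by
  rcases (hn x).eq_or_lt with hx | hx
  · have hmin : IsLocalMin n x := Eventually.of_forall fun y => hx ▸ hn y
    rw [hmin.hasDerivAt_eq_zero hd]
    exact hc hx.symm
  · exact le_of_mul_le_mul_left h hx

theorem forall_ge_of_delay_step {P : ℝ → Prop} {τ : ℝ} (hτ : 0 < τ)
    (hbase : ∀ s ∈ Icc (-τ) 0, P s)
    (hstep : ∀ a, 0 ≤ a → (∀ s ∈ Icc (-τ) a, P s) → ∀ s ∈ Icc a (a + τ), P s) :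
    ∀ s, -τ ≤ s → P s := by
  have hk : ∀ k : ℕ, ∀ s ∈ Icc (-τ) (k * τ), P s := by
    intro k
    induction k with
    | zero => simpa using hbase
    | succ k ih =>
      intro s hs
      rcases le_total s (k * τ) with hsk | hsk
      · exact ih s ⟨hs.1, hsk⟩
      · exact hstep _ (by positivity) ih s ⟨hsk, by push_cast at hs; linarith [hs.2]⟩
  intro s hs
  refine hk ⌈s / τ⌉₊ s ⟨hs, ?_⟩
  rw [← div_le_iff₀ hτ]
  exact Nat.le_ceil _

/-- `ν d` is nonincreasing, since `(ν d)' = ν (d' - γ d)`. -/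
theorem nonpos_of_hasDerivAt_le_mul {γ d d' : ℝ → ℝ} {a b : ℝ} (hγ : Continuous γ)
    (hd : ContinuousOn d (Icc a b)) (hd' : ∀ x ∈ Ioo a b, HasDerivAt d (d' x) x)
    (hle : ∀ x ∈ Ioo a b, d' x ≤ γ x * d x) (ha : d a ≤ 0) :
    ∀ x ∈ Icc a b, d x ≤ 0 := by
  have hanti : AntitoneOn (fun x => nu γ x * d x) (Icc a b) := by
    refine antitoneOn_of_hasDerivWithinAt_nonpos (convex_Icc a b)
      ((continuous_nu hγ).continuousOn.mul hd) (fun x hx => ?_) (fun x hx => ?_)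
      (f' := fun x => nu γ x * (d' x - γ x * d x))
    · rw [interior_Icc] at hx
      exact (((hasDerivAt_nu hγ x).mul (hd' x hx)).congr_deriv (by ring)).hasDerivWithinAt
    · rw [interior_Icc] at hx
      exact mul_nonpos_of_nonneg_of_nonpos (nu_pos γ x).le (by linarith [hle x hx])
  intro x hx
  have := hanti (left_mem_Icc.2 (hx.1.trans hx.2)) hx hx.1
  exact nonpos_of_mul_nonpos_right (this.trans (mul_nonpos_of_nonneg_of_nonpos
    (nu_pos γ a).le ha)) (nu_pos γ x)

theorem le_of_delay_comparison {τ : ℝ} {γ n n' h h' : ℝ → ℝ} (hτ : 0 < τ) (hγ : Continuous γ)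
    (hn : ∀ t, 0 ≤ t → HasDerivWithinAt n (n' t) (Ici 0) t)
    (hh : ∀ t, 0 ≤ t → HasDerivWithinAt h (h' t) (Ici 0) t)
    (hinit : ∀ t ∈ Icc (-τ) 0, n t ≤ h t)
    (hineq : ∀ t, 0 < t → n (t - τ) ≤ h (t - τ) → n' t - h' t ≤ γ t * (n t - h t)) :
    ∀ t, -τ ≤ t → n t ≤ h t := by
  refine forall_ge_of_delay_step hτ hinit fun a ha hle t ht => ?_
  have hderiv : ∀ x ∈ Ioo a (a + τ), HasDerivAt (fun s => n s - h s) (n' x - h' x) x :=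
    fun x hx => by
      have hx0 : Ici (0 : ℝ) ∈ 𝓝 x := Ici_mem_nhds (ha.trans_lt hx.1)
      exact ((hn x (ha.trans hx.1.le)).hasDerivAt hx0).sub
        ((hh x (ha.trans hx.1.le)).hasDerivAt hx0)
  have hcont : ContinuousOn (fun s => n s - h s) (Icc a (a + τ)) := fun x hx =>
    ((hn x (ha.trans hx.1)).continuousWithinAt.sub
      (hh x (ha.trans hx.1)).continuousWithinAt).mono fun y hy => ha.trans hy.1
  have := nonpos_of_hasDerivAt_le_mul hγ hcont hderiv
    (fun x hx => hineq x (ha.trans_lt hx.1) (hle _ ⟨by linarith [hx.1], by linarith [hx.2]⟩))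
    (by linarith [hle a ⟨by linarith, le_rfl⟩]) t ht
  linarith

theorem norm_le_of_delay_comparison {𝕜 E : Type*} [RCLike 𝕜] [NormedAddCommGroup E]
    [InnerProductSpace 𝕜 E] [NormedSpace ℝ E] {τ p : ℝ} {γ α : ℝ → ℝ} {u u' : ℝ → E}
    {h h' : ℝ → ℝ} (hτ : 0 < τ) (hp : 0 ≤ p) (hγ : Continuous γ) (hα : ∀ t, 0 ≤ α t)
    (hud : ∀ t, 0 ≤ t → HasDerivWithinAt u (u' t) (Ici 0) t)
    (hnd : ∀ t, 0 ≤ t → DifferentiableWithinAt ℝ (fun s => ‖u s‖) (Ici 0) t)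
    (huineq : ∀ t, 0 ≤ t → RCLike.re ⟪u t, u' t⟫_𝕜 ≤
      γ t * ‖u t‖ ^ 2 + α t * ‖u t‖ * ‖u (t - τ)‖ ^ p)
    (hhd : ∀ t, 0 ≤ t → HasDerivWithinAt h (h' t) (Ici 0) t)
    (hheq : ∀ t, 0 ≤ t → h' t = γ t * h t + α t * h (t - τ) ^ p)
    (hinit : ∀ t ∈ Icc (-τ) 0, h t = ‖u t‖) :
    ∀ t, -τ ≤ t → ‖u t‖ ≤ h t := by
  refine le_of_delay_comparison hτ hγ (fun t ht => (hnd t ht).hasDerivWithinAt) hhd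
    (fun t ht => (hinit t ht).ge) fun t ht hdelay => ?_
  set n' := derivWithin (fun s => ‖u s‖) (Ici 0) t
  have hdelay_pow : α t * ‖u (t - τ)‖ ^ p ≤ α t * h (t - τ) ^ p :=
    mul_le_mul_of_nonneg_left (Real.rpow_le_rpow (norm_nonneg _) hdelay hp) (hα t)
  have hmul : ‖u t‖ * n' ≤ ‖u t‖ * (γ t * ‖u t‖ + α t * h (t - τ) ^ p) := by
    rw [(hud t ht.le).norm_mul_eq_re_inner (𝕜 := 𝕜) (uniqueDiffOn_Ici 0 t ht.le)
      (hnd t ht.le).hasDerivWithinAt]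
    calc RCLike.re ⟪u t, u' t⟫_𝕜
        ≤ ‖u t‖ * (γ t * ‖u t‖ + α t * ‖u (t - τ)‖ ^ p) := by linarith [huineq t ht.le]
      _ ≤ ‖u t‖ * (γ t * ‖u t‖ + α t * h (t - τ) ^ p) :=
        mul_le_mul_of_nonneg_left (by linarith) (norm_nonneg _)
  have hn' : n' ≤ γ t * ‖u t‖ + α t * h (t - τ) ^ p :=
    ((hnd t ht.le).hasDerivWithinAt.hasDerivAt (Ici_mem_nhds ht)).le_of_mul_le_mul_left_of_nonneg
      (fun _ => norm_nonneg _)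
      (fun h0 => by
        rw [h0, mul_zero, zero_add]
        exact mul_nonneg (hα t) (Real.rpow_nonneg ((norm_nonneg _).trans hdelay) p)) hmul
  rw [hheq t ht.le]
  linarith

/-- Bihari's inequality for `w' ≤ β w ^ p`: the function `w ^ (1 - p) + (p - 1) ∫ β` is
nondecreasing. -/
theorem rpow_one_sub_sub_integral_le {w W β : ℝ → ℝ} {p a b : ℝ} (hp : 1 < p) (hab : a ≤ b)
    (hw : ContinuousOn w (Icc a b)) (hpos : ∀ x ∈ Icc a b, 0 < w x)
    (hw' : ∀ x ∈ Ioo a b, HasDerivAt w (W x) x) (hβ : Continuous β)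
    (hle : ∀ x ∈ Ioo a b, W x ≤ β x * w x ^ p) :
    w a ^ (1 - p) - (p - 1) * ∫ x in a..b, β x ≤ w b ^ (1 - p) := by
  have hprim : ∀ x, HasDerivAt (fun y => ∫ ξ in a..y, β ξ) (β x) x := fun x =>
    intervalIntegral.integral_hasDerivAt_right (hβ.intervalIntegrable _ _)
      hβ.aestronglyMeasurable.stronglyMeasurableAtFilter hβ.continuousAt
  have hmono : MonotoneOn (fun x => w x ^ (1 - p) + (p - 1) * ∫ ξ in a..x, β ξ) (Icc a b) := by
    refine monotoneOn_of_hasDerivWithinAt_nonneg (convex_Icc a b)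
      ((hw.rpow_const fun x hx => Or.inl (hpos x hx).ne').add
        (continuous_const.mul (continuous_iff_continuousAt.2 fun x =>
          (hprim x).continuousAt)).continuousOn)
      (fun x hx => ?_) (fun x hx => ?_)
      (f' := fun x => (p - 1) * (β x - w x ^ (-p) * W x))
    · rw [interior_Icc] at hx
      have hwx := (hpos x (Ioo_subset_Icc_self hx)).ne'
      refine ((((hw' x hx).rpow_const (p := 1 - p) (Or.inl hwx)).add
        ((hprim x).const_mul (p - 1))).congr_deriv ?_).hasDerivWithinAt
      rw [show 1 - p - 1 = -p by ring]
      ring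
    · rw [interior_Icc] at hx
      have hwx := hpos x (Ioo_subset_Icc_self hx)
      have : w x ^ (-p) * W x ≤ β x := by
        calc w x ^ (-p) * W x ≤ w x ^ (-p) * (β x * w x ^ p) :=
              mul_le_mul_of_nonneg_left (hle x hx) (Real.rpow_nonneg hwx.le _)
          _ = β x := by
              rw [mul_left_comm, ← Real.rpow_add hwx, neg_add_cancel, Real.rpow_zero, mul_one]
      exact mul_nonneg (by linarith) (by linarith)
  have := hmono (left_mem_Icc.2 hab) (right_mem_Icc.2 hab) hab
  simp only [intervalIntegral.integral_same, mul_zero, add_zero] at this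
  linarith

theorem le_rpow_neg_inv_of_le_rpow_one_sub {x D p : ℝ} (hp : 1 < p) (hx : 0 < x) (hD : 0 < D)
    (hle : D ≤ x ^ (1 - p)) : x ≤ D ^ (-(1 / (p - 1))) := by
  have hinv : (x ^ (1 - p)) ^ (-(1 / (p - 1))) = x := by
    rw [← Real.rpow_mul hx.le, show (1 - p) * -(1 / (p - 1)) = 1 by
      field_simp [(sub_pos.2 hp).ne']; ring, Real.rpow_one]
  calc x = (x ^ (1 - p)) ^ (-(1 / (p - 1))) := hinv.symm
    _ ≤ D ^ (-(1 / (p - 1))) :=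
        Real.rpow_le_rpow_of_nonpos hD hle (neg_nonpos.2 (one_div_pos.2 (sub_pos.2 hp)).le)

section DelayEquation

variable {τ p : ℝ} {γ α h h' : ℝ → ℝ}

theorem hasDerivWithinAt_nu_mul_of_delay_eq (hγ : Continuous γ) {t : ℝ}
    (hhd : HasDerivWithinAt h (h' t) (Ici 0) t)
    (hheq : h' t = γ t * h t + α t * h (t - τ) ^ p) :
    HasDerivWithinAt (fun s => nu γ s * h s) (α t * nu γ t * h (t - τ) ^ p) (Ici 0) t :=
  ((hasDerivAt_nu hγ t).hasDerivWithinAt.mul hhd).congr_deriv (by rw [hheq]; ring)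

variable (hγ : Continuous γ) (hhd : ∀ t, 0 ≤ t → HasDerivWithinAt h (h' t) (Ici 0) t)
  (hheq : ∀ t, 0 ≤ t → h' t = γ t * h t + α t * h (t - τ) ^ p)
include hγ hhd hheq

theorem nu_mul_eq_add_integral_of_delay_eq (hp : 0 ≤ p) (hαc : Continuous α)
    (hhc : ContinuousOn h (Ici (-τ))) {t : ℝ} (ht : 0 ≤ t) :
    nu γ t * h t = h 0 + ∫ ξ in (0 : ℝ)..t, α ξ * nu γ ξ * h (ξ - τ) ^ p := by
  have hW : ContinuousOn (fun ξ => α ξ * nu γ ξ * h (ξ - τ) ^ p) (Icc 0 t) :=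
    (hαc.mul (continuous_nu hγ)).continuousOn.mul <|
      (Real.continuous_rpow_const hp).comp_continuousOn <|
        hhc.comp (continuous_sub_right τ).continuousOn fun ξ hξ => by
          simp only [mem_Ici]; linarith [hξ.1]
  have hw := fun x (hx : 0 ≤ x) => hasDerivWithinAt_nu_mul_of_delay_eq hγ (hhd x hx) (hheq x hx)
  rw [intervalIntegral.integral_eq_sub_of_hasDeriv_right_of_le ht
    (fun x hx => (hw x hx.1).continuousWithinAt.mono fun y hy => hy.1)
    (fun x hx => ((hw x hx.1.le).hasDerivAt (Ici_mem_nhds hx.1)).hasDerivWithinAt)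
    (hW.intervalIntegrable_of_Icc ht), nu_zero]
  ring

theorem monotoneOn_nu_mul_of_delay_eq (hα : ∀ t, 0 ≤ α t) (hh0 : ∀ t, -τ ≤ t → 0 ≤ h t) :
    MonotoneOn (fun s => nu γ s * h s) (Ici 0) := by
  refine monotoneOn_of_hasDerivWithinAt_nonneg (convex_Ici 0)
    (fun x hx =>
      (hasDerivWithinAt_nu_mul_of_delay_eq hγ (hhd x hx) (hheq x hx)).continuousWithinAt)
    (fun x hx => ?_) (fun x hx => ?_) (f' := fun x => α x * nu γ x * h (x - τ) ^ p)
  · rw [interior_Ici] at hx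
    exact (hasDerivWithinAt_nu_mul_of_delay_eq hγ (hhd x hx.le) (hheq x hx.le)).mono
      interior_subset
  · rw [interior_Ici] at hx
    exact mul_nonneg (mul_nonneg (hα x) (nu_pos γ x).le)
      (Real.rpow_nonneg (hh0 _ (by linarith [mem_Ioi.1 hx])) p)

theorem delay_term_le_of_delay_eq (hτ : 0 ≤ τ) (hp : 0 ≤ p) (hα : ∀ t, 0 ≤ α t)
    (hh0 : ∀ t, -τ ≤ t → 0 ≤ h t) {s : ℝ} (hs : τ ≤ s) :
    α s * nu γ s * h (s - τ) ^ p ≤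
      α s * sig γ τ s ^ p * nu γ s ^ (1 - p) * (nu γ s * h s) ^ p := by
  have hτs : 0 ≤ s - τ := sub_nonneg.2 hs
  have hw_nonneg : 0 ≤ nu γ (s - τ) * h (s - τ) :=
    mul_nonneg (nu_pos γ _).le (hh0 _ (by linarith))
  have hwle : nu γ (s - τ) * h (s - τ) ≤ nu γ s * h s :=
    monotoneOn_nu_mul_of_delay_eq hγ hhd hheq hα hh0 hτs (hτ.trans hs) (sub_le_self s hτ)
  have hsplit : nu γ s * h (s - τ) ^ p =
      nu γ s ^ (1 - p) * (sig γ τ s * (nu γ (s - τ) * h (s - τ))) ^ p := by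
    rw [← mul_assoc, mul_comm (sig γ τ s), nu_mul_sig hγ,
      Real.mul_rpow (nu_pos γ s).le (hh0 _ (by linarith)), ← mul_assoc,
      ← Real.rpow_add (nu_pos γ s), sub_add_cancel, Real.rpow_one]
  calc α s * nu γ s * h (s - τ) ^ p
      = α s * (nu γ s ^ (1 - p) * (sig γ τ s * (nu γ (s - τ) * h (s - τ))) ^ p) := by
        rw [mul_assoc, hsplit]
    _ ≤ α s * (nu γ s ^ (1 - p) * (sig γ τ s * (nu γ s * h s)) ^ p) := by
        have := sig_pos γ τ s
        have := hα s
        have := Real.rpow_pos_of_pos (nu_pos γ s) (1 - p)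
        gcongr
    _ = α s * sig γ τ s ^ p * nu γ s ^ (1 - p) * (nu γ s * h s) ^ p := by
        rw [Real.mul_rpow (sig_pos γ τ s).le (hw_nonneg.trans hwle)]
        ring

theorem rpow_one_sub_sub_integral_le_nu_mul_of_delay_eq (hτ : 0 ≤ τ) (hp : 1 < p)
    (hαc : Continuous α) (hα : ∀ t, 0 ≤ α t) (hh0 : ∀ t, -τ ≤ t → 0 ≤ h t)
    (hpos : 0 < nu γ τ * h τ) {t : ℝ} (ht : τ ≤ t) :
    (nu γ τ * h τ) ^ (1 - p) - (p - 1) * ∫ ξ in τ..t, α ξ * sig γ τ ξ ^ p * nu γ ξ ^ (1 - p) ≤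
      (nu γ t * h t) ^ (1 - p) := by
  have hderiv := fun x (hx : τ ≤ x) =>
    hasDerivWithinAt_nu_mul_of_delay_eq hγ (hhd x (hτ.trans hx)) (hheq x (hτ.trans hx))
  have hβ : Continuous fun ξ => α ξ * sig γ τ ξ ^ p * nu γ ξ ^ (1 - p) :=
    (hαc.mul ((continuous_sig hγ τ).rpow_const fun _ => Or.inr (by linarith))).mul
      ((continuous_nu hγ).rpow_const fun x => Or.inl (nu_pos γ x).ne')
  exact rpow_one_sub_sub_integral_le hp ht
    (fun x hx => (hderiv x hx.1).continuousWithinAt.mono fun y hy => hτ.trans hy.1)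
    (fun x hx => hpos.trans_le (monotoneOn_nu_mul_of_delay_eq hγ hhd hheq hα hh0 hτ
      (hτ.trans hx.1) hx.1))
    (fun x hx => (hderiv x hx.1.le).hasDerivAt (Ici_mem_nhds (hτ.trans_lt hx.1)))
    hβ fun x hx => delay_term_le_of_delay_eq hγ hhd hheq hτ (by linarith) hα hh0 hx.1.le

end DelayEquation

theorem stmt_15_general
    {H : Type*} [NormedAddCommGroup H] [InnerProductSpace ℂ H]
    (τ p : ℝ) (hτ : 0 < τ) (hp : 1 < p)
    (γ α : ℝ → ℝ)
    (hγc : Continuous γ) (hαc : Continuous α)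
    (hα : ∀ t, 0 ≤ α t)
    (u : ℝ → H) (u' : ℝ → H)
    (hud : ∀ t, 0 ≤ t → HasDerivWithinAt u (u' t) (Ici (0:ℝ)) t)
    (hnd : ∀ t, 0 ≤ t → DifferentiableWithinAt ℝ (fun s => ‖u s‖) (Ici (0:ℝ)) t)
    (huineq : ∀ t, 0 ≤ t → (⟪u t, u' t⟫).re ≤
      γ t * ‖u t‖ ^ 2 + α t * ‖u t‖ * ‖u (t - τ)‖ ^ p)
    (h h' : ℝ → ℝ)
    (hhc : ContinuousOn h (Ici (-τ)))
    (hhd : ∀ t, 0 ≤ t → HasDerivWithinAt h (h' t) (Ici (0:ℝ)) t)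
    (hheq : ∀ t, 0 ≤ t → h' t = γ t * h t + α t * h (t - τ) ^ p)
    (hinit : ∀ t, -τ ≤ t → t ≤ 0 → h t = ‖u t‖)
    (hτv : ℝ)
    (hτvdef : hτv = (‖u 0‖ + ∫ ξ in (0:ℝ)..τ,
        α ξ * nu γ ξ * ‖u (ξ - τ)‖ ^ p) / nu γ τ)
    (hτvpos : 0 < hτv)
    (I : ℝ)
    (hint : IntegrableOn (fun ξ => α ξ * sig γ τ ξ ^ p * nu γ ξ ^ (1 - p)) (Ici τ))
    (hI : I = ∫ ξ in Ici τ, α ξ * sig γ τ ξ ^ p * nu γ ξ ^ (1 - p))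
    (hcond : (p - 1) * I < (hτv * nu γ τ) ^ (1 - p)) :
    ∀ t, τ ≤ t →
      ‖u t‖ ≤ (1 / nu γ t) * ((hτv * nu γ τ) ^ (1 - p)
          - (p - 1) * ∫ ξ in τ..t, α ξ * sig γ τ ξ ^ p * nu γ ξ ^ (1 - p))
            ^ (-(1 / (p - 1))) := by
  intro t ht
  have hcmp : ∀ s, -τ ≤ s → ‖u s‖ ≤ h s :=
    norm_le_of_delay_comparison (𝕜 := ℂ) hτ (by linarith) hγc hα hud hnd huineq hhd hheq
      fun s hs => hinit s hs.1 hs.2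
  have hh0 : ∀ s, -τ ≤ s → 0 ≤ h s := fun s hs => (norm_nonneg _).trans (hcmp s hs)
  have hwτ : hτv * nu γ τ = nu γ τ * h τ := by
    rw [hτvdef, div_mul_cancel₀ _ (nu_pos γ τ).ne', nu_mul_eq_add_integral_of_delay_eq hγc hhd
      hheq (by linarith) hαc hhc hτ.le, hinit 0 (by linarith) le_rfl]
    congr 1
    refine intervalIntegral.integral_congr fun ξ hξ => ?_
    rw [uIcc_of_le hτ.le] at hξ
    simp only [hinit (ξ - τ) (by linarith [hξ.1]) (by linarith [hξ.2])]
  have hwτ_pos : 0 < nu γ τ * h τ := hwτ ▸ mul_pos hτvpos (nu_pos γ τ)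
  have hwt_pos : 0 < nu γ t * h t := hwτ_pos.trans_le <|
    monotoneOn_nu_mul_of_delay_eq hγc hhd hheq hα hh0 hτ.le (hτ.le.trans ht) ht
  have hbihari := hwτ ▸
    rpow_one_sub_sub_integral_le_nu_mul_of_delay_eq hγc hhd hheq hτ.le hp hαc hα hh0 hwτ_pos ht
  have hJ : ∫ ξ in τ..t, α ξ * sig γ τ ξ ^ p * nu γ ξ ^ (1 - p) ≤ I := by
    rw [intervalIntegral.integral_of_le ht, hI]
    exact setIntegral_mono_set hint (Eventually.of_forall fun ξ => mul_nonneg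
      (mul_nonneg (hα ξ) (Real.rpow_nonneg (sig_pos γ τ ξ).le p))
      (Real.rpow_nonneg (nu_pos γ ξ).le _))
      (Ioc_subset_Ioi_self.trans Ioi_subset_Ici_self).eventuallyLE
  have hD : 0 < (hτv * nu γ τ) ^ (1 - p)
      - (p - 1) * ∫ ξ in τ..t, α ξ * sig γ τ ξ ^ p * nu γ ξ ^ (1 - p) := by
    linarith [mul_le_mul_of_nonneg_left hJ (sub_pos.2 hp).le]
  calc ‖u t‖ ≤ h t := hcmp t (by linarith)
    _ = 1 / nu γ t * (nu γ t * h t) := by field_simp [(nu_pos γ t).ne']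
    _ ≤ _ := mul_le_mul_of_nonneg_left
        (le_rpow_neg_inv_of_le_rpow_one_sub hp hwt_pos hD hbihari) (one_div_pos.2 (nu_pos γ t)).le

/-- Corollary 2.8 (Corollary 1), the estimate (64) for the case `f = 0`. -/
theorem stmt_15
    {H : Type*} [NormedAddCommGroup H] [InnerProductSpace ℂ H]
    (τ p : ℝ) (hτ : 0 < τ) (hp : 1 < p)
    (γ α : ℝ → ℝ)
    (hγc : Continuous γ) (hαc : Continuous α)
    (hα : ∀ t, 0 ≤ α t)
    (u : ℝ → H) (u' : ℝ → H)
    (huc : ContinuousOn u (Ici (-τ)))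
    (hud : ∀ t, 0 ≤ t → HasDerivWithinAt u (u' t) (Ici (0:ℝ)) t)
    (hnd : ∀ t, 0 ≤ t → DifferentiableWithinAt ℝ (fun s => ‖u s‖) (Ici (0:ℝ)) t)
    (huineq : ∀ t, 0 ≤ t → (⟪u t, u' t⟫).re ≤
      γ t * ‖u t‖ ^ 2 + α t * ‖u t‖ * ‖u (t - τ)‖ ^ p)
    (h h' : ℝ → ℝ)
    (hh0 : ∀ t, -τ ≤ t → 0 ≤ h t)
    (hhc : ContinuousOn h (Ici (-τ)))
    (hhd : ∀ t, 0 ≤ t → HasDerivWithinAt h (h' t) (Ici (0:ℝ)) t)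
    (hheq : ∀ t, 0 ≤ t → h' t = γ t * h t + α t * h (t - τ) ^ p)
    (hinit : ∀ t, -τ ≤ t → t ≤ 0 → h t = ‖u t‖)
    (hτv : ℝ)
    (hτvdef : hτv = (‖u 0‖ + ∫ ξ in (0:ℝ)..τ,
        α ξ * nu γ ξ * ‖u (ξ - τ)‖ ^ p) / nu γ τ)
    (hτvpos : 0 < hτv)
    (I : ℝ)
    (hint : IntegrableOn (fun ξ => α ξ * sig γ τ ξ ^ p * nu γ ξ ^ (1 - p)) (Ici τ))
    (hI : I = ∫ ξ in Ici τ, α ξ * sig γ τ ξ ^ p * nu γ ξ ^ (1 - p))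
    (hcond : (p - 1) * I < (hτv * nu γ τ) ^ (1 - p)) :
    ∀ t, τ ≤ t →
      ‖u t‖ ≤ (1 / nu γ t) * ((hτv * nu γ τ) ^ (1 - p)
          - (p - 1) * ∫ ξ in τ..t, α ξ * sig γ τ ξ ^ p * nu γ ξ ^ (1 - p))
            ^ (-(1 / (p - 1))) :=
  stmt_15_general τ p hτ hp γ α hγc hαc hα u u' hud hnd huineq h h' hhc hhd hheq hinit hτv hτvdef
    hτvpos I hint hI hcond
end

section
/- (Lemma on a supersolution 1/μ.) Let μ : ℝ → ℝ be positive on [−τ, ∞), continuous on [−τ, ∞) and differentiable on [0, ∞), and suppose that for all t ≥ 0, α(t)·μ(t)/μ(t−τ)^p + β(t)·μ(t) ≤ −γ(t) − μ′(t)/μ(t), and that ‖u(t)‖ ≤ 1/μ(t) for all t ∈ [−τ, 0]. Then ‖u(t)‖ ≤ 1/μ(t) for all t ≥ 0. -/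
open Real MeasureTheory Set Filter ComplexInnerProductSpace

/-- Lemma 2.10: if `μ > 0` satisfies
`α(t) μ(t)/μ(t−τ)^p + β(t) μ(t) ≤ −γ(t) − μ'(t)/μ(t)` on `[0,∞)` and
`‖u(t)‖ ≤ 1/μ(t)` on `[−τ,0]`, then `‖u(t)‖ ≤ 1/μ(t)` for all `t ≥ 0`. -/
theorem stmt_19
    {H : Type*} [NormedAddCommGroup H] [InnerProductSpace ℂ H]
    (τ p : ℝ) (hτ : 0 < τ) (hp : 1 < p)
    (γ α β : ℝ → ℝ)
    (hγc : Continuous γ) (hαc : Continuous α) (hβc : Continuous β)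
    (hα : ∀ t, 0 ≤ α t) (hβ : ∀ t, 0 ≤ β t)
    (u : ℝ → H) (u' : ℝ → H)
    (huc : ContinuousOn u (Ici (-τ)))
    (hud : ∀ t, 0 ≤ t → HasDerivWithinAt u (u' t) (Ici (0:ℝ)) t)
    (hnd : ∀ t, 0 ≤ t → DifferentiableWithinAt ℝ (fun s => ‖u s‖) (Ici (0:ℝ)) t)
    (huineq : ∀ t, 0 ≤ t → (⟪u t, u' t⟫).re ≤
      γ t * ‖u t‖ ^ 2 + α t * ‖u t‖ * ‖u (t - τ)‖ ^ p + β t * ‖u t‖)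
    (μ μ' : ℝ → ℝ)
    (hμpos : ∀ t, -τ ≤ t → 0 < μ t)
    (hμc : ContinuousOn μ (Ici (-τ)))
    (hμd : ∀ t, 0 ≤ t → HasDerivWithinAt μ (μ' t) (Ici (0:ℝ)) t)
    (hμineq : ∀ t, 0 ≤ t →
      α t * μ t / μ (t - τ) ^ p + β t * μ t ≤ -γ t - μ' t / μ t)
    (hinit : ∀ t, -τ ≤ t → t ≤ 0 → ‖u t‖ ≤ 1 / μ t) :
    ∀ t, 0 ≤ t → ‖u t‖ ≤ 1 / μ t := by
  set n : ℝ → ℝ := fun s => ‖u s‖ with hn_def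
  set N : ℝ → ℝ := fun s => derivWithin n (Ici 0) s with hN_def
  -- derivatives become two-sided for t > 0
  have hnderiv : ∀ t, 0 < t → HasDerivAt n (N t) t := fun t ht =>
    ((hnd t ht.le).hasDerivWithinAt).hasDerivAt (Ici_mem_nhds ht)
  have huderiv : ∀ t, 0 < t → HasDerivAt u (u' t) t := fun t ht =>
    (hud t ht.le).hasDerivAt (Ici_mem_nhds ht)
  have hmderiv : ∀ t, 0 < t → HasDerivAt μ (μ' t) t := fun t ht =>
    (hμd t ht.le).hasDerivAt (Ici_mem_nhds ht)
  have hwderiv : ∀ t, 0 < t →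
      HasDerivAt (fun s => n s * μ s) (N t * μ t + n t * μ' t) t := fun t ht =>
    (hnderiv t ht).mul (hmderiv t ht)
  -- n t * N t = Re⟪u t, u' t⟫
  have hnn' : ∀ t, 0 < t → n t * N t = (⟪u t, u' t⟫).re := by
    intro t ht
    have h1 : HasDerivAt (fun s => ‖u s‖ ^ 2) (2 * ‖u t‖ ^ 1 * N t) t :=
      (hnderiv t ht).pow 2
    have h2' : HasDerivAt (fun s => (⟪u s, u s⟫ : ℂ)) (⟪u t, u' t⟫ + ⟪u' t, u t⟫) t :=
      (huderiv t ht).inner ℂ (huderiv t ht)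
    have h2 : HasDerivAt (fun s => ‖u s‖ ^ 2) ((⟪u t, u' t⟫ + ⟪u' t, u t⟫).re) t := by
      have h := Complex.reCLM.hasFDerivAt.comp_hasDerivAt t h2'
      have funeq : (fun s => ‖u s‖ ^ 2) = fun s => (⟪u s, u s⟫ : ℂ).re := by
        funext s
        rw [← inner_self_eq_norm_sq (𝕜 := ℂ) (u s)]
        simp [RCLike.re_to_complex]
      rw [funeq]
      exact h
    have key := h1.unique h2
    have h3 : (⟪u' t, u t⟫ : ℂ).re = (⟪u t, u' t⟫ : ℂ).re := by
      rw [← inner_conj_symm (u t) (u' t), Complex.conj_re]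
    rw [Complex.add_re, h3] at key
    nlinarith [key]
  -- differential inequality for n
  have nineq : ∀ t, 0 < t → N t ≤ γ t * n t + α t * n (t - τ) ^ p + β t := by
    intro t ht
    rcases eq_or_lt_of_le (norm_nonneg (u t)) with hzero | hpos
    · -- ‖u t‖ = 0 : local min, derivative zero
      have hmin : IsLocalMin n t :=
        Filter.Eventually.of_forall (fun s => by
          simp only [hn_def]; rw [← hzero]; exact norm_nonneg _)
      have hN0 : N t = 0 := hmin.hasDerivAt_eq_zero (hnderiv t ht)
      have h1 : 0 ≤ α t * n (t - τ) ^ p := by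
        apply mul_nonneg (hα t) (Real.rpow_nonneg (norm_nonneg _) p)
      have h2 : n t = 0 := hzero.symm
      rw [hN0, h2]
      have := hβ t
      nlinarith
    · have key := hnn' t ht
      have hui := huineq t ht.le
      have hsq : ‖u t‖ ^ 2 = n t * n t := by rw [pow_two]
      have : n t * N t ≤ n t * (γ t * n t + α t * n (t - τ) ^ p + β t) := by
        rw [key]
        calc (⟪u t, u' t⟫).re ≤ γ t * ‖u t‖ ^ 2 + α t * ‖u t‖ * ‖u (t - τ)‖ ^ p + β t * ‖u t‖ := hui
          _ = n t * (γ t * n t + α t * n (t - τ) ^ p + β t) := by rw [hsq]; ring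
      exact le_of_mul_le_mul_left this hpos
  -- key upper bound at a crossing point
  have hkey : ∀ t, 0 < t → -τ ≤ t - τ → n (t - τ) * μ (t - τ) ≤ 1 →
      1 ≤ n t * μ t → N t * μ t + n t * μ' t ≤ 0 := by
    intro t ht0 hτt hprev hw1
    have hmpos := hμpos t (by linarith)
    have hmτpos := hμpos (t - τ) hτt
    have hmτp : 0 < μ (t - τ) ^ p := Real.rpow_pos_of_pos hmτpos p
    have hN := nineq t ht0
    have hnτ : n (t - τ) ^ p ≤ 1 / μ (t - τ) ^ p := by
      have h0 : n (t - τ) ≤ 1 / μ (t - τ) := (le_div_iff₀ hmτpos).mpr hprev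
      calc n (t - τ) ^ p ≤ (1 / μ (t - τ)) ^ p :=
            Real.rpow_le_rpow (norm_nonneg _) h0 (by linarith)
        _ = 1 / μ (t - τ) ^ p := by
            rw [one_div, Real.inv_rpow hmτpos.le, one_div]
    have hμi := hμineq t ht0.le
    have e1 : N t * μ t ≤ γ t * (n t * μ t) + α t * μ t / μ (t - τ) ^ p + β t * μ t := by
      have h5 := mul_le_mul_of_nonneg_right hN hmpos.le
      have h6 : α t * n (t - τ) ^ p * μ t ≤ α t * μ t / μ (t - τ) ^ p := by
        rw [div_eq_mul_inv]
        have h7 : α t * n (t - τ) ^ p ≤ α t * (1 / μ (t - τ) ^ p) :=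
          mul_le_mul_of_nonneg_left hnτ (hα t)
        calc α t * n (t - τ) ^ p * μ t ≤ (α t * (1 / μ (t - τ) ^ p)) * μ t :=
              mul_le_mul_of_nonneg_right h7 hmpos.le
          _ = α t * μ t * (μ (t - τ) ^ p)⁻¹ := by rw [one_div]; ring
      nlinarith [h5, h6]
    have e2 : n t * μ' t = μ' t / μ t * (n t * μ t) := by
      field_simp
    have hc : γ t + μ' t / μ t ≤ 0 := by
      have h7 : 0 ≤ α t * μ t / μ (t - τ) ^ p :=
        div_nonneg (mul_nonneg (hα t) hmpos.le) hmτp.le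
      have h8 : 0 ≤ β t * μ t := mul_nonneg (hβ t) hmpos.le
      linarith [hμi]
    have hprod : (γ t + μ' t / μ t) * (n t * μ t - 1) ≤ 0 :=
      mul_nonpos_of_nonpos_of_nonneg hc (by linarith)
    nlinarith [e1, e2, hμi, hprod]
  -- continuity of w on Ici (-τ)
  have hwc : ContinuousOn (fun s => n s * μ s) (Ici (-τ)) := huc.norm.mul hμc
  -- main induction over intervals [kτ, (k+1)τ]
  have main : ∀ k : ℕ, ∀ t, -τ ≤ t → t ≤ k * τ → n t * μ t ≤ 1 := by
    intro k
    induction k with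
    | zero =>
      intro t h1 h2
      simp only [Nat.cast_zero, zero_mul] at h2
      have := hinit t h1 h2
      exact (le_div_iff₀ (hμpos t h1)).mp this
    | succ k ih =>
      intro t h1 h2
      by_cases hta : t ≤ k * τ
      · exact ih t h1 hta
      push_neg at hta
      set a : ℝ := (k : ℝ) * τ with ha
      have ha0 : 0 ≤ a := by positivity
      have hta' : t ≤ a + τ := by
        have : ((k : ℝ) + 1) * τ = a + τ := by ring
        rw [ha]
        push_cast at h2
        linarith
      have hε : ∀ ε, 0 < ε → n t * μ t ≤ 1 + ε * (1 + (t - a)) := by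
        intro ε hε0
        by_contra hcon
        push_neg at hcon
        set S := {s | s ∈ Icc a t ∧ 1 + ε * (1 + (s - a)) ≤ n s * μ s} with hS
        have hSne : S.Nonempty := ⟨t, ⟨hta.le, le_refl t⟩, hcon.le⟩
        have hSbdd : BddBelow S := ⟨a, fun s hs => hs.1.1⟩
        have hIccsub : Icc a t ⊆ Ici (-τ) := fun s hs => by
          have := hs.1; simp only [mem_Ici]; linarith
        have hSclosed : IsClosed S := by
          have hrw : S = Icc a t ∩
              (fun s => n s * μ s - (1 + ε * (1 + (s - a)))) ⁻¹' Ici 0 := by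
            ext s
            simp only [hS, mem_setOf_eq, mem_inter_iff, mem_preimage, mem_Ici, sub_nonneg]
          rw [hrw]
          exact ContinuousOn.preimage_isClosed_of_isClosed
            ((hwc.mono hIccsub).sub (by fun_prop)) isClosed_Icc isClosed_Ici
        set t₁ := sInf S with ht₁
        have ht₁S : t₁ ∈ S := hSclosed.csInf_mem hSne hSbdd
        have hwa : n a * μ a ≤ 1 := ih a (by linarith) le_rfl
        have ht₁a : a < t₁ := by
          rcases lt_or_eq_of_le ht₁S.1.1 with h | h
          · exact h
          · exfalso
            have := ht₁S.2
            rw [← h] at this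
            simp only [sub_self] at this
            nlinarith
        have ht₁pos : 0 < t₁ := lt_of_le_of_lt ha0 ht₁a
        have hbefore : ∀ s, a ≤ s → s < t₁ → n s * μ s < 1 + ε * (1 + (s - a)) := by
          intro s hs1 hs2
          by_contra hc'
          push_neg at hc'
          have hsS : s ∈ S := ⟨⟨hs1, hs2.le.trans ht₁S.1.2⟩, hc'⟩
          exact absurd (csInf_le hSbdd hsS) (not_le.mpr hs2)
        have hw' := hwderiv t₁ ht₁pos
        -- upper bound on derivative
        have hub : N t₁ * μ t₁ + n t₁ * μ' t₁ ≤ 0 := by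
          apply hkey t₁ ht₁pos (by linarith)
          · apply ih (t₁ - τ) (by linarith)
            have := ht₁S.1.2
            linarith
          · have h4 := ht₁S.2
            nlinarith [ht₁S.1.1]
        -- lower bound on derivative via slope from the left
        have hlb : ε ≤ N t₁ * μ t₁ + n t₁ * μ' t₁ := by
          have hslope := hasDerivAt_iff_tendsto_slope.mp hw'
          have hmem : Ioo a t₁ ∈ nhdsWithin t₁ (Set.Iio t₁) := Ioo_mem_nhdsLT_of_mem ⟨ht₁a, le_rfl⟩
          have h2' : Tendsto (slope (fun s => n s * μ s) t₁) (nhdsWithin t₁ (Set.Iio t₁))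
              (nhds (N t₁ * μ t₁ + n t₁ * μ' t₁)) :=
            hslope.mono_left (nhdsWithin_mono _ (fun x hx => ne_of_lt hx))
          apply ge_of_tendsto h2'
          filter_upwards [hmem] with s hs
          have h3 : n s * μ s < 1 + ε * (1 + (s - a)) := hbefore s hs.1.le hs.2
          have h4 : 1 + ε * (1 + (t₁ - a)) ≤ n t₁ * μ t₁ := ht₁S.2
          have hst : s - t₁ < 0 := by linarith [hs.2]
          have h5 : n s * μ s - n t₁ * μ t₁ ≤ ε * (s - t₁) := by nlinarith
          rw [slope_def_field, le_div_iff_of_neg hst]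
          linarith
        linarith
      have h1τ : (0 : ℝ) < 1 + τ := by linarith
      apply le_of_forall_pos_le_add
      intro δ hδ
      have hεδ := hε (δ / (1 + τ)) (by positivity)
      have hbound : δ / (1 + τ) * (1 + (t - a)) ≤ δ := by
        have h6 : 1 + (t - a) ≤ 1 + τ := by linarith
        have h7 : 0 < δ / (1 + τ) := by positivity
        calc δ / (1 + τ) * (1 + (t - a)) ≤ δ / (1 + τ) * (1 + τ) :=
              mul_le_mul_of_nonneg_left h6 h7.le
          _ = δ := by field_simp
      linarith
  -- conclude
  intro t ht
  obtain ⟨k, hk⟩ := exists_nat_ge (t / τ)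
  have hkt : t ≤ k * τ := by
    rw [div_le_iff₀ hτ] at hk
    linarith
  have := main k t (by linarith) hkt
  exact (le_div_iff₀ (hμpos t (by linarith))).mpr this
end
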